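/- For every 1 ≤ i ≤ n−1 and a, b ∈ ℂ with a ≠ 0 and b ≠ 0, the socle of the ℂ[x,y]-module M = ℂ[x,y]/I_i(a,b), i.e. {m ∈ M : x·m = 0 and y·m = 0}, is a one-dimensional ℂ-vector space spanned by the (nonzero) class of x^i (which equals (b/a) times the class of y^{n−i}). -/
import Mathlib


open MvPolynomial

/-- The Ito–Nakamura ideal `I_i(a,b) = ⟨a·xⁱ − b·y^{n−i}, x^{i+1}, xy, y^{n+1−i}⟩`. -/
noncomputable def itoNak (n i : ℕ) (a b : ℂ) : Ideal (MvPolynomial (Fin 2) ℂ) :=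
  Ideal.span
    {C a * X 0 ^ i - C b * X 1 ^ (n - i), X 0 ^ (i + 1), X 0 * X 1, X 1 ^ (n + 1 - i)}

/-- The socle `{m ∈ ℂ[x,y]/I : x·m = 0 ∧ y·m = 0}` of the `ℂ[x,y]`-module `ℂ[x,y]/I`,
as a `ℂ`-subspace. -/
noncomputable def socle (I : Ideal (MvPolynomial (Fin 2) ℂ)) :
    Submodule ℂ (MvPolynomial (Fin 2) ℂ ⧸ I) where
  carrier := {m | Ideal.Quotient.mk I (X 0) * m = 0 ∧ Ideal.Quotient.mk I (X 1) * m = 0}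
  add_mem' := by
    rintro p q ⟨hp1, hp2⟩ ⟨hq1, hq2⟩
    exact ⟨by rw [mul_add, hp1, hq1, add_zero], by rw [mul_add, hp2, hq2, add_zero]⟩
  zero_mem' := ⟨mul_zero _, mul_zero _⟩
  smul_mem' := by
    rintro c p ⟨hp1, hp2⟩
    exact ⟨by rw [mul_smul_comm, hp1, smul_zero], by rw [mul_smul_comm, hp2, smul_zero]⟩


namespace INaux

/-- `ee u v` is the exponent finsupp of the monomial `x^u y^v`. -/
noncomputable def ee (u v : ℕ) : Fin 2 →₀ ℕ :=
  Finsupp.single 0 u + Finsupp.single 1 v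

@[simp] lemma ee_apply0 (u v : ℕ) : ee u v 0 = u := by
  simp [ee, Finsupp.single_apply]

@[simp] lemma ee_apply1 (u v : ℕ) : ee u v 1 = v := by
  simp [ee, Finsupp.single_apply]

lemma d_eq (d : Fin 2 →₀ ℕ) : d = ee (d 0) (d 1) := by
  ext t
  fin_cases t <;> simp

lemma ee_eq_iff {u v u' v' : ℕ} : ee u v = ee u' v' ↔ u = u' ∧ v = v' := by
  constructor
  · intro h
    constructor
    · have := DFunLike.congr_fun h 0; simpa using this
    · have := DFunLike.congr_fun h 1; simpa using this
  · rintro ⟨rfl, rfl⟩; rfl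

lemma ee_le_iff {u v u' v' : ℕ} : ee u v ≤ ee u' v' ↔ u ≤ u' ∧ v ≤ v' := by
  rw [Finsupp.le_def]
  constructor
  · intro h; exact ⟨by simpa using h 0, by simpa using h 1⟩
  · rintro ⟨h1, h2⟩ t; fin_cases t <;> simpa

lemma ee_add (u v u' v' : ℕ) : ee u v + ee u' v' = ee (u + u') (v + v') := by
  ext t; fin_cases t <;> simp

lemma ee_sub (u v u' v' : ℕ) : ee u v - ee u' v' = ee (u - u') (v - v') := by
  ext t; fin_cases t <;> simp [Finsupp.tsub_apply]

lemma X0_pow (u : ℕ) : (X 0 : MvPolynomial (Fin 2) ℂ) ^ u = monomial (ee u 0) 1 := by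
  rw [X_pow_eq_monomial]; congr 1; simp [ee]

lemma X1_pow (v : ℕ) : (X 1 : MvPolynomial (Fin 2) ℂ) ^ v = monomial (ee 0 v) 1 := by
  rw [X_pow_eq_monomial]; congr 1; simp [ee]

lemma X0X1 : (X 0 * X 1 : MvPolynomial (Fin 2) ℂ) = monomial (ee 1 1) 1 := by
  rw [← pow_one (X 0 : MvPolynomial (Fin 2) ℂ), ← pow_one (X 1 : MvPolynomial (Fin 2) ℂ),
    X0_pow, X1_pow, monomial_mul, ee_add, one_mul]

lemma CX0_pow (c : ℂ) (u : ℕ) :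
    (C c * X 0 ^ u : MvPolynomial (Fin 2) ℂ) = monomial (ee u 0) c := by
  rw [C_mul_X_pow_eq_monomial]; congr 1; simp [ee]

lemma CX1_pow (c : ℂ) (v : ℕ) :
    (C c * X 1 ^ v : MvPolynomial (Fin 2) ℂ) = monomial (ee 0 v) c := by
  rw [C_mul_X_pow_eq_monomial]; congr 1; simp [ee]

lemma coeff_mul_mono (u v s t : ℕ) (c : ℂ) (p : MvPolynomial (Fin 2) ℂ) :
    coeff (ee u v) (p * monomial (ee s t) c) =
      if s ≤ u ∧ t ≤ v then coeff (ee (u - s) (v - t)) p * c else 0 := by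
  rw [coeff_mul_monomial', ee_sub]
  simp only [ee_le_iff]

end INaux

namespace INaux

noncomputable def J (i j : ℕ) (a b : ℂ) : Ideal (MvPolynomial (Fin 2) ℂ) :=
  Ideal.span {monomial (ee i 0) a - monomial (ee 0 j) b, monomial (ee (i+1) 0) 1,
    monomial (ee 1 1) 1, monomial (ee 0 (j+1)) 1}

variable {i j : ℕ} {a b : ℂ}

/-- A "functional" that kills each `q * g` for `g` a generator kills the ideal. -/
lemma vanish (φ : MvPolynomial (Fin 2) ℂ → ℂ)
    (hadd : ∀ p q, φ (p + q) = φ p + φ q)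
    (hgen : ∀ g ∈ ({monomial (ee i 0) a - monomial (ee 0 j) b, monomial (ee (i+1) 0) 1,
      monomial (ee 1 1) 1, monomial (ee 0 (j+1)) (1:ℂ)} : Set (MvPolynomial (Fin 2) ℂ)),
      ∀ q, φ (q * g) = 0) :
    ∀ p ∈ J i j a b, φ p = 0 := by
  have h0 : φ 0 = 0 := by
    have := hadd 0 0; simpa using this
  intro p hp
  let N : Ideal (MvPolynomial (Fin 2) ℂ) :=
    { carrier := {x | ∀ q, φ (q * x) = 0}
      add_mem' := by
        intro x y hx hy q
        rw [mul_add, hadd, hx, hy, add_zero]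
      zero_mem' := by intro q; rw [mul_zero]; exact h0
      smul_mem' := by
        intro r x hx q
        rw [smul_eq_mul, ← mul_assoc]
        exact hx (q * r) }
  have hle : J i j a b ≤ N := by
    rw [J, Ideal.span_le]
    intro g hg q
    exact hgen g hg q
  have := hle hp 1
  rwa [one_mul] at this

lemma coeff_vanish (u v : ℕ) (hu : u < i) (hv : v < j)
    (huv : ¬ (1 ≤ u ∧ 1 ≤ v)) :
    ∀ p ∈ J i j a b, coeff (ee u v) p = 0 := by
  apply vanish
  · intro p q; exact coeff_add _ _ _
  · intro g hg q
    simp only [Set.mem_insert_iff, Set.mem_singleton_iff] at hg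
    rcases hg with rfl | rfl | rfl | rfl
    · rw [mul_sub, coeff_sub, coeff_mul_mono, coeff_mul_mono,
        if_neg (by omega), if_neg (by omega), sub_zero]
    · rw [coeff_mul_mono, if_neg (by omega)]
    · rw [coeff_mul_mono, if_neg (by omega)]
    · rw [coeff_mul_mono, if_neg (by omega)]

lemma L_vanish (hi : 1 ≤ i) (hj : 1 ≤ j) :
    ∀ p ∈ J i j a b, b * coeff (ee i 0) p + a * coeff (ee 0 j) p = 0 := by
  apply vanish
  · intro p q; simp only [coeff_add]; ring
  · intro g hg q
    simp only [Set.mem_insert_iff, Set.mem_singleton_iff] at hg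
    rcases hg with rfl | rfl | rfl | rfl
    · rw [mul_sub]
      simp only [coeff_sub, coeff_mul_mono]
      rw [if_pos (by omega), if_neg (by omega), if_neg (by omega), if_pos (by omega)]
      simp only [Nat.sub_self]
      ring
    · simp only [coeff_mul_mono]
      rw [if_neg (by omega), if_neg (by omega)]; ring
    · simp only [coeff_mul_mono]
      rw [if_neg (by omega), if_neg (by omega)]; ring
    · simp only [coeff_mul_mono]
      rw [if_neg (by omega), if_neg (by omega)]; ring

lemma gen_mem (g : MvPolynomial (Fin 2) ℂ)
    (hg : g ∈ ({monomial (ee i 0) a - monomial (ee 0 j) b, monomial (ee (i+1) 0) 1,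
      monomial (ee 1 1) 1, monomial (ee 0 (j+1)) (1:ℂ)} : Set (MvPolynomial (Fin 2) ℂ))) :
    g ∈ J i j a b := Ideal.subset_span hg

lemma mono_mem (u v : ℕ) (c : ℂ) (h : i + 1 ≤ u ∨ (1 ≤ u ∧ 1 ≤ v) ∨ j + 1 ≤ v) :
    monomial (ee u v) c ∈ J i j a b := by
  rcases h with h | ⟨h1, h2⟩ | h
  · obtain ⟨w, rfl⟩ : ∃ w, u = w + (i+1) := ⟨u - (i+1), by omega⟩
    have : monomial (ee (w + (i+1)) v) c =
        monomial (ee w v) c * monomial (ee (i+1) 0) 1 := by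
      rw [monomial_mul, ee_add, mul_one, add_zero]
    rw [this]
    exact Ideal.mul_mem_left _ _ (gen_mem _ (by simp))
  · obtain ⟨w, rfl⟩ : ∃ w, u = w + 1 := ⟨u - 1, by omega⟩
    obtain ⟨z, rfl⟩ : ∃ z, v = z + 1 := ⟨v - 1, by omega⟩
    have : monomial (ee (w + 1) (z + 1)) c =
        monomial (ee w z) c * monomial (ee 1 1) 1 := by
      rw [monomial_mul, ee_add, mul_one]
    rw [this]
    exact Ideal.mul_mem_left _ _ (gen_mem _ (by simp))
  · obtain ⟨z, rfl⟩ : ∃ z, v = z + (j+1) := ⟨v - (j+1), by omega⟩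
    have : monomial (ee u (z + (j+1))) c =
        monomial (ee u z) c * monomial (ee 0 (j+1)) 1 := by
      rw [monomial_mul, ee_add, mul_one, add_zero]
    rw [this]
    exact Ideal.mul_mem_left _ _ (gen_mem _ (by simp))

end INaux

namespace INaux

variable {i j : ℕ} {a b : ℂ}

lemma reduce (hi : 1 ≤ i) (hj : 1 ≤ j) (p : MvPolynomial (Fin 2) ℂ)
    (hp0 : ∀ u < i, coeff (ee u 0) p = 0) (hp1 : ∀ v < j, coeff (ee 0 v) p = 0) :
    p - coeff (ee i 0) p • monomial (ee i 0) 1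
      - coeff (ee 0 j) p • monomial (ee 0 j) 1 ∈ J i j a b := by
  set q := p - coeff (ee i 0) p • monomial (ee i 0) 1
      - coeff (ee 0 j) p • monomial (ee 0 j) 1 with hq
  rw [as_sum q]
  apply Ideal.sum_mem
  intro d hd
  rw [mem_support_iff] at hd
  obtain ⟨u, v, rfl⟩ : ∃ u v, d = ee u v := ⟨d 0, d 1, d_eq d⟩
  by_cases hreg : i + 1 ≤ u ∨ (1 ≤ u ∧ 1 ≤ v) ∨ j + 1 ≤ v
  · exact mono_mem _ _ _ hreg
  · exfalso; apply hd
    push_neg at hreg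
    rw [hq]
    simp only [coeff_sub, coeff_smul, coeff_monomial, smul_eq_mul, ee_eq_iff]
    rcases (by omega : v = 0 ∨ (u = 0 ∧ v ≤ j)) with rfl | ⟨rfl, hv⟩
    · by_cases hui : u = i
      · subst hui
        rw [if_pos ⟨rfl, rfl⟩, if_neg (by rintro ⟨h1, h2⟩; omega)]
        ring
      · rw [hp0 u (by omega), if_neg (by rintro ⟨h1, h2⟩; omega),
          if_neg (by rintro ⟨h1, h2⟩; omega)]
        ring
    · by_cases hvj : v = j
      · subst hvj
        rw [if_neg (by rintro ⟨h1, h2⟩; omega), if_pos ⟨rfl, rfl⟩]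
        ring
      · rw [hp1 v (by omega), if_neg (by rintro ⟨h1, h2⟩; omega),
          if_neg (by rintro ⟨h1, h2⟩; omega)]
        ring

lemma mk_smul (I : Ideal (MvPolynomial (Fin 2) ℂ)) (c : ℂ) (p : MvPolynomial (Fin 2) ℂ) :
    Ideal.Quotient.mk I (C c * p) = c • Ideal.Quotient.mk I p := by
  rw [← smul_eq_C_mul]
  rfl

end INaux

section THM
open INaux

/-- for `a ≠ 0 ≠ b`, the socle of `ℂ[x,y]/I_i(a,b)` is one-dimensional,
spanned by the nonzero class of `xⁱ`, which equals `(b/a)` times the class of `y^{n−i}`. -/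
theorem itoNak_socle (n i : ℕ) (h1 : 1 ≤ i) (h2 : i ≤ n - 1) (a b : ℂ)
    (ha : a ≠ 0) (hb : b ≠ 0) :
    Ideal.Quotient.mk (itoNak n i a b) (X 0 ^ i) ≠ 0 ∧
    socle (itoNak n i a b) =
      Submodule.span ℂ {Ideal.Quotient.mk (itoNak n i a b) (X 0 ^ i)} ∧
    Module.finrank ℂ (socle (itoNak n i a b)) = 1 ∧
    Ideal.Quotient.mk (itoNak n i a b) (X 0 ^ i) =
      (b / a) • Ideal.Quotient.mk (itoNak n i a b) (X 1 ^ (n - i)) := by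
  have hn : i + 1 ≤ n := by omega
  set j := n - i with hjdef
  have hj : 1 ≤ j := by omega
  set K := Ideal.Quotient.mk (itoNak n i a b) with hK
  have hIJ : itoNak n i a b = J i j a b := by
    rw [itoNak, J]
    congr 1
    rw [CX0_pow, CX1_pow, X0_pow, X0X1,
      show n + 1 - i = j + 1 by omega, X1_pow]
  have hXi : (X 0 ^ i : MvPolynomial (Fin 2) ℂ) = monomial (ee i 0) 1 := X0_pow i
  have hYj : (X 1 ^ j : MvPolynomial (Fin 2) ℂ) = monomial (ee 0 j) 1 := X1_pow j
  have hX0 : (X 0 : MvPolynomial (Fin 2) ℂ) = monomial (ee 1 0) 1 := by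
    rw [← pow_one (X 0 : MvPolynomial (Fin 2) ℂ), X0_pow]
  have hX1 : (X 1 : MvPolynomial (Fin 2) ℂ) = monomial (ee 0 1) 1 := by
    rw [← pow_one (X 1 : MvPolynomial (Fin 2) ℂ), X1_pow]
  -- the relation in the quotient
  have hrel : a • K (monomial (ee i 0) 1) = b • K (monomial (ee 0 j) 1) := by
    rw [← mk_smul, ← mk_smul, C_mul_monomial, C_mul_monomial, mul_one, mul_one,
      ← sub_eq_zero, ← map_sub, Ideal.Quotient.eq_zero_iff_mem, hIJ]
    exact gen_mem _ (by simp)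
  -- part 1 : nonvanishing of x^i
  have part1 : K (X 0 ^ i) ≠ 0 := by
    intro h
    rw [hXi, hK, Ideal.Quotient.eq_zero_iff_mem, hIJ] at h
    have hLz := L_vanish (a := a) (b := b) h1 hj _ h
    rw [coeff_monomial, coeff_monomial, if_pos rfl,
      if_neg (by rw [ee_eq_iff]; omega), mul_zero, add_zero, mul_one] at hLz
    exact hb hLz
  -- part 4 : x^i = (b/a) y^(n-i)
  have part4 : K (X 0 ^ i) = (b / a) • K (X 1 ^ j) := by
    rw [hXi, hYj]
    have := congrArg (a⁻¹ • ·) hrel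
    simpa [smul_smul, inv_mul_cancel₀ ha, div_eq_inv_mul] using this
  -- y^j in terms of x^i
  have hyx : K (monomial (ee 0 j) 1) = (a / b) • K (monomial (ee i 0) 1) := by
    have h := congrArg (b⁻¹ • ·) hrel
    simp only [smul_smul, inv_mul_cancel₀ hb, one_smul] at h
    rw [div_eq_inv_mul]
    exact h.symm
  -- part 2 : the socle is the span of x^i
  have part2 : socle (itoNak n i a b) = Submodule.span ℂ {K (X 0 ^ i)} := by
    apply le_antisymm
    · -- hard direction
      intro m hm
      obtain ⟨p, rfl⟩ := Ideal.Quotient.mk_surjective m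
      obtain ⟨hmx, hmy⟩ := hm
      have hx : X 0 * p ∈ J i j a b := by
        rw [← hIJ, ← Ideal.Quotient.eq_zero_iff_mem, map_mul]
        exact hmx
      have hy : X 1 * p ∈ J i j a b := by
        rw [← hIJ, ← Ideal.Quotient.eq_zero_iff_mem, map_mul]
        exact hmy
      have cxp : ∀ u, coeff (ee (u + 1) 0) (X 0 * p) = coeff (ee u 0) p := by
        intro u
        rw [hX0, mul_comm, coeff_mul_mono, if_pos ⟨by omega, le_refl 0⟩, mul_one,
          Nat.add_sub_cancel, Nat.sub_zero]
      have cyp : ∀ v, coeff (ee 0 (v + 1)) (X 1 * p) = coeff (ee 0 v) p := by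
        intro v
        rw [hX1, mul_comm, coeff_mul_mono, if_pos ⟨le_refl 0, by omega⟩, mul_one,
          Nat.add_sub_cancel, Nat.sub_zero]
      have hp0 : ∀ u < i, coeff (ee u 0) p = 0 := by
        intro u hu
        by_cases hcase : u + 1 < i
        · rw [← cxp u]
          exact coeff_vanish (u + 1) 0 hcase (by omega) (by omega) _ hx
        · have hLz := L_vanish (a := a) (b := b) h1 hj _ hx
          have e1 : coeff (ee i 0) (X 0 * p) = coeff (ee u 0) p := by
            rw [show i = u + 1 by omega]
            exact cxp u
          have e2 : coeff (ee 0 j) (X 0 * p) = 0 := by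
            rw [hX0, mul_comm, coeff_mul_mono, if_neg (by omega)]
          rw [e1, e2, mul_zero, add_zero] at hLz
          exact (mul_eq_zero.mp hLz).resolve_left hb
      have hp1 : ∀ v < j, coeff (ee 0 v) p = 0 := by
        intro v hv
        by_cases hcase : v + 1 < j
        · rw [← cyp v]
          exact coeff_vanish 0 (v + 1) (by omega) hcase (by omega) _ hy
        · have hLz := L_vanish (a := a) (b := b) h1 hj _ hy
          have e1 : coeff (ee 0 j) (X 1 * p) = coeff (ee 0 v) p := by
            rw [show j = v + 1 by omega]
            exact cyp v
          have e2 : coeff (ee i 0) (X 1 * p) = 0 := by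
            rw [hX1, mul_comm, coeff_mul_mono, if_neg (by omega)]
          rw [e1, e2, mul_zero, zero_add] at hLz
          exact (mul_eq_zero.mp hLz).resolve_left ha
      have hred := reduce (a := a) (b := b) h1 hj p hp0 hp1
      rw [← hIJ, ← Ideal.Quotient.eq_zero_iff_mem, ← hK] at hred
      set c1 := coeff (ee i 0) p
      set c2 := coeff (ee 0 j) p
      have hKp : K p = c1 • K (monomial (ee i 0) 1) + c2 • K (monomial (ee 0 j) 1) := by
        have : K (p - c1 • monomial (ee i 0) 1 - c2 • monomial (ee 0 j) 1)
            = K p - c1 • K (monomial (ee i 0) 1) - c2 • K (monomial (ee 0 j) 1) := by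
          rw [map_sub, map_sub, smul_eq_C_mul, smul_eq_C_mul, mk_smul, mk_smul]
        rw [this] at hred
        rw [sub_sub, sub_eq_zero] at hred
        exact hred
      rw [Submodule.mem_span_singleton]
      refine ⟨c1 + c2 * (a / b), ?_⟩
      rw [hXi, hKp, hyx, add_smul, smul_smul, mul_comm c2]
    · rw [Submodule.span_le, Set.singleton_subset_iff]
      constructor
      · rw [← map_mul, ← pow_succ', Ideal.Quotient.eq_zero_iff_mem]
        exact Ideal.subset_span (by simp)
      · rw [← map_mul, Ideal.Quotient.eq_zero_iff_mem, hIJ]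
        have : (X 1 * X 0 ^ i : MvPolynomial (Fin 2) ℂ) = monomial (ee i 1) 1 := by
          rw [hX1, hXi, monomial_mul, ee_add, mul_one, zero_add, add_zero]
        rw [this]
        exact mono_mem _ _ _ (Or.inr (Or.inl ⟨h1, le_refl 1⟩))
  refine ⟨part1, part2, ?_, part4⟩
  rw [part2]
  exact finrank_span_singleton part1

end THM
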